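/- For every prime p, every natural number r ≥ 0, and every natural n ≥ p + p^2 + ... + p^r, the congruence B_{n − (p + p^2 + ... + p^r)} ≡ B_{n, −r} (mod p) holds. -/

import Mathlib

open Finset

/-- Stirling numbers of the second kind. -/
def S2 : ℕ → ℕ → ℕ
  | 0, 0 => 1
  | 0, _ + 1 => 0
  | _ + 1, 0 => 0
  | n + 1, k + 1 => (k + 1) * S2 n (k + 1) + S2 n k

/-- Bell numbers. -/
def bell (n : ℕ) : ℕ := ∑ k ∈ Finset.range (n + 1), S2 n k

/-- r-Stirling numbers of the second kind. -/
def rS2 (r : ℕ) : ℕ → ℕ → ℕ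
  | 0, 0 => 1
  | 0, _ + 1 => 0
  | n + 1, 0 => r * rS2 r n 0
  | n + 1, k + 1 => rS2 r n k + (k + 1 + r) * rS2 r n (k + 1)

/-- Unsigned r-Stirling numbers of the first kind. -/
def rS1 (r : ℕ) : ℕ → ℕ → ℕ
  | 0, 0 => 1
  | 0, _ + 1 => 0
  | n + 1, 0 => (r + n) * rS1 r n 0
  | n + 1, k + 1 => rS1 r n k + (r + n) * rS1 r n (k + 1)

/-- r-Bell numbers for integer r. -/
def rBell (n : ℕ) (r : ℤ) : ℤ :=
  ∑ j ∈ Finset.range (n + 1), (n.choose j : ℤ) * r ^ (n - j) * (bell j : ℤ)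

/-- r-Bell numbers for natural r, via r-Stirling numbers. -/
def rBellNat (n r : ℕ) : ℕ := ∑ k ∈ Finset.range (n + 1), rS2 r n k

open Polynomial

@[simp] lemma S2_zero_zero : S2 0 0 = 1 := rfl
@[simp] lemma S2_zero_succ (k : ℕ) : S2 0 (k+1) = 0 := rfl
@[simp] lemma S2_succ_zero (n : ℕ) : S2 (n+1) 0 = 0 := rfl
lemma S2_succ_succ (n k : ℕ) : S2 (n+1) (k+1) = (k + 1) * S2 n (k + 1) + S2 n k := rfl

lemma S2_eq_zero {n k : ℕ} (h : n < k) : S2 n k = 0 := by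
  induction n generalizing k with
  | zero => cases k with | zero => omega | succ k => rfl
  | succ n ih =>
    cases k with
    | zero => omega
    | succ k => rw [S2_succ_succ, ih (by omega), ih (by omega)]; ring

@[simp] lemma S2_self (n : ℕ) : S2 n n = 1 := by
  induction n with
  | zero => rfl
  | succ n ih => rw [S2_succ_succ, S2_eq_zero (by omega), ih]; ring

lemma S2_succ_eq_sum (n j : ℕ) :
    S2 (n+1) (j+1) = ∑ i ∈ range (n+1), n.choose i * S2 i j := by
  induction n generalizing j with
  | zero => simp [S2_succ_succ]
  | succ n ih =>
    rw [Finset.sum_range_succ']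
    have h1 : ∀ i ∈ range (n+1), (n+1).choose (i+1) * S2 (i+1) j
        = n.choose i * S2 (i+1) j + n.choose (i+1) * S2 (i+1) j := by
      intro i _; rw [Nat.choose_succ_succ', add_mul]
    rw [Finset.sum_congr rfl h1, Finset.sum_add_distrib]
    have e1 : ∑ i ∈ range (n+2), n.choose i * S2 i j
        = ∑ i ∈ range (n+1), n.choose (i+1) * S2 (i+1) j + n.choose 0 * S2 0 j :=
      Finset.sum_range_succ' (fun i => n.choose i * S2 i j) (n+1)
    have e2 : ∑ i ∈ range (n+2), n.choose i * S2 i j = S2 (n+1) (j+1) := by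
      rw [Finset.sum_range_succ, Nat.choose_succ_self, zero_mul, add_zero, ih]
    have h2 : ∑ i ∈ range (n+1), n.choose (i+1) * S2 (i+1) j + (n+1).choose 0 * S2 0 j
        = S2 (n+1) (j+1) := by
      rw [show (n+1).choose 0 * S2 0 j = n.choose 0 * S2 0 j by simp, ← e1, e2]
    conv_rhs => rw [add_assoc, h2]
    cases j with
    | zero =>
      simp only [S2_succ_zero, mul_zero, Finset.sum_const_zero, zero_add]
      rw [S2_succ_succ]; simp
    | succ j =>
      have h3 : ∀ i ∈ range (n+1), n.choose i * S2 (i+1) (j+1)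
          = (j+1) * (n.choose i * S2 i (j+1)) + n.choose i * S2 i j := by
        intro i _; rw [S2_succ_succ]; ring
      rw [Finset.sum_congr rfl h3, Finset.sum_add_distrib, ← Finset.mul_sum, ← ih, ← ih,
        S2_succ_succ (n+1) (j+1)]
      ring

lemma S2_sum_bell {n m : ℕ} (h : n ≤ m) : ∑ j ∈ range (m+1), S2 n j = bell n := by
  rw [bell]
  have : ∑ j ∈ range (m+1), S2 n j = ∑ j ∈ range (n+1), S2 n j + ∑ j ∈ Ico (n+1) (m+1), S2 n j := by
    rw [Finset.range_eq_Ico, Finset.range_eq_Ico, Finset.sum_Ico_consecutive]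
    · omega
    · omega
  have hz : ∑ j ∈ Ico (n+1) (m+1), S2 n j = 0 :=
    Finset.sum_eq_zero fun j hj => S2_eq_zero (by simp [Finset.mem_Ico] at hj; omega)
  rw [this, hz, add_zero]

lemma bell_succ (n : ℕ) : bell (n+1) = ∑ i ∈ range (n+1), n.choose i * bell i := by
  rw [bell, Finset.sum_range_succ']
  simp only [S2_succ_zero, add_zero]
  have : ∀ i ∈ range (n+1), S2 (n+1) (i+1) = ∑ k ∈ range (n+1), n.choose k * S2 k i := fun i _ =>
    S2_succ_eq_sum n i
  rw [Finset.sum_congr rfl this, Finset.sum_comm]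
  refine Finset.sum_congr rfl fun k hk => ?_
  rw [← Finset.mul_sum, S2_sum_bell (by simp at hk; omega)]

noncomputable def ff (R : Type*) [CommRing R] (k : ℕ) : R[X] :=
  ∏ j ∈ range k, (X - C (j : R))

lemma ff_zero (R : Type*) [CommRing R] : ff R 0 = 1 := by simp [ff]
lemma ff_one (R : Type*) [CommRing R] : ff R 1 = X := by simp [ff]
lemma ff_succ (R : Type*) [CommRing R] (k : ℕ) : ff R (k+1) = ff R k * (X - C (k : R)) := by
  rw [ff, Finset.prod_range_succ, ff]
lemma ff_monic (R : Type*) [CommRing R] [Nontrivial R] (k : ℕ) : (ff R k).Monic :=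
  monic_prod_of_monic _ _ fun j _ => monic_X_sub_C _
lemma ff_natDegree (R : Type*) [CommRing R] [Nontrivial R] (k : ℕ) : (ff R k).natDegree = k := by
  rw [ff, natDegree_prod_of_monic _ _ fun j _ => monic_X_sub_C _]
  simp only [natDegree_X_sub_C, Finset.sum_const, smul_eq_mul, mul_one, card_range]

lemma X_pow_eq_sum_ff (R : Type*) [CommRing R] (n : ℕ) :
    (X : R[X])^n = ∑ k ∈ range (n+1), (S2 n k : R[X]) * ff R k := by
  induction n with
  | zero => simp [ff_zero]
  | succ n ih =>
    have hXff : ∀ k, (X : R[X]) * ff R k = ff R (k+1) + (k : R[X]) * ff R k := by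
      intro k; rw [ff_succ, Polynomial.C_eq_natCast]; ring
    have eA : ∑ k ∈ range (n+2), (k : R[X]) * ((S2 n k : R[X]) * ff R k)
        = ∑ k ∈ range (n+1), ((k+1 : ℕ) : R[X]) * ((S2 n (k+1) : R[X]) * ff R (k+1))
          + ((0:ℕ) : R[X]) * ((S2 n 0 : R[X]) * ff R 0) := by
      have := Finset.sum_range_succ' (fun k => ((k:ℕ) : R[X]) * ((S2 n k : R[X]) * ff R k)) (n+1)
      exact this
    rw [Nat.cast_zero, zero_mul, add_zero] at eA
    have eA' : ∑ k ∈ range (n+2), (k : R[X]) * ((S2 n k : R[X]) * ff R k)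
        = ∑ k ∈ range (n+1), (k : R[X]) * ((S2 n k : R[X]) * ff R k) := by
      rw [Finset.sum_range_succ, S2_eq_zero (Nat.lt_succ_self n)]; simp
    have eT : ∑ k ∈ range (n+2), (S2 (n+1) k : R[X]) * ff R k
        = ∑ k ∈ range (n+1), ((S2 (n+1) (k+1) : ℕ) : R[X]) * ff R (k+1)
          + ((S2 (n+1) 0 : ℕ) : R[X]) * ff R 0 :=
      Finset.sum_range_succ' (fun k => (S2 (n+1) k : R[X]) * ff R k) (n+1)
    rw [eT]
    simp only [S2_succ_zero, Nat.cast_zero, zero_mul, add_zero]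
    have eS : ∀ k ∈ range (n+1), ((S2 (n+1) (k+1) : ℕ) : R[X]) * ff R (k+1)
        = (S2 n k : R[X]) * ff R (k+1)
          + ((k+1 : ℕ) : R[X]) * ((S2 n (k+1) : R[X]) * ff R (k+1)) := by
      intro k _; rw [S2_succ_succ]; push_cast; ring
    rw [Finset.sum_congr rfl eS, Finset.sum_add_distrib, ← eA, eA']
    rw [pow_succ', ih, Finset.mul_sum]
    rw [Finset.sum_congr rfl (fun k _ => by rw [mul_left_comm, hXff k, mul_add] :
      ∀ k ∈ range (n+1), (X : R[X]) * ((S2 n k : R[X]) * ff R k)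
        = (S2 n k : R[X]) * ff R (k+1) + (S2 n k : R[X]) * ((k : R[X]) * ff R k))]
    rw [Finset.sum_add_distrib]
    congr 1
    exact Finset.sum_congr rfl fun k _ => by ring

lemma ff_sum_zero (R : Type*) [CommRing R] [Nontrivial R] (c : ℕ → R) :
    ∀ N, (∑ k ∈ range (N+1), C (c k) * ff R k) = 0 → ∀ k ≤ N, c k = 0 := by
  intro N
  induction N with
  | zero =>
    intro h k hk
    interval_cases k
    rw [Finset.sum_range_one, ff_zero, mul_one, C_eq_zero] at h
    exact h
  | succ N ih =>
    intro h k hk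
    have hcN : c (N+1) = 0 := by
      have h1 : (∑ k ∈ range (N+2), C (c k) * ff R k).coeff (N+1) = 0 := by rw [h]; simp
      rw [finset_sum_coeff] at h1
      rw [Finset.sum_eq_single (N+1)] at h1
      · rw [coeff_C_mul] at h1
        have : (ff R (N+1)).coeff (N+1) = 1 := by
          have := (ff_monic R (N+1)).coeff_natDegree
          rwa [ff_natDegree] at this
        rwa [this, mul_one] at h1
      · intro b hb hne
        rw [coeff_C_mul, coeff_eq_zero_of_natDegree_lt, mul_zero]
        rw [ff_natDegree]
        simp only [Finset.mem_range] at hb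
        omega
      · intro hb; simp at hb
    rcases Nat.lt_or_ge k (N+1) with hk' | hk'
    · apply ih _ _ (by omega)
      rw [Finset.sum_range_succ, hcN, map_zero, zero_mul, add_zero] at h
      exact h
    · have : k = N+1 := by omega
      rw [this]; exact hcN

lemma ff_p (p : ℕ) [Fact p.Prime] : ff (ZMod p) p = X^p - X := by
  have hp : p.Prime := Fact.out
  have hcard : Fintype.card (ZMod p) = p := ZMod.card p
  have hroots := FiniteField.roots_X_pow_card_sub_X (ZMod p)
  rw [hcard] at hroots
  have hm : Monic (X^p - X : (ZMod p)[X]) := by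
    apply monic_X_pow_sub
    rw [degree_X]
    exact_mod_cast hp.one_lt
  have hdeg : (X^p - X : (ZMod p)[X]).natDegree = p :=
    FiniteField.X_pow_card_sub_X_natDegree_eq _ hp.one_lt
  have hprod := prod_multiset_X_sub_C_of_monic_of_roots_card_eq hm
    (by rw [hroots, hdeg, ← Finset.card_univ (α := ZMod p)] at *; exact hcard)
  rw [← hprod, hroots, ff, ← Finset.prod_eq_multiset_prod]
  haveI : NeZero p := ⟨hp.ne_zero⟩
  refine Finset.prod_nbij' (fun j => (j : ZMod p)) (fun a => a.val) ?_ ?_ ?_ ?_ ?_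
  · intro a _; exact Finset.mem_univ _
  · intro a _; exact Finset.mem_range.mpr (ZMod.val_lt a)
  · intro a ha; exact ZMod.val_cast_of_lt (Finset.mem_range.mp ha)
  · intro a _; rw [ZMod.natCast_val, ZMod.cast_id]
  · intro a _; rfl

lemma S2_p_cast (p : ℕ) [Fact p.Prime] (k : ℕ) :
    (S2 p k : ZMod p) = (if k = 1 then 1 else 0) + (if k = p then 1 else 0) := by
  have hp : p.Prime := Fact.out
  set c : ℕ → ZMod p :=
    fun k => (S2 p k : ZMod p) - (if k = 1 then 1 else 0) - (if k = p then 1 else 0) with hc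
  have hsum : (∑ k ∈ range (p+1), C (c k) * ff (ZMod p) k) = 0 := by
    simp only [hc, map_sub, sub_mul, Finset.sum_sub_distrib]
    have h1 : ∑ k ∈ range (p+1), C ((S2 p k : ZMod p)) * ff (ZMod p) k = X^p := by
      rw [X_pow_eq_sum_ff]
      exact Finset.sum_congr rfl fun k _ => by rw [C_eq_natCast]
    have h2 : ∑ k ∈ range (p+1), C (if k = 1 then (1:ZMod p) else 0) * ff (ZMod p) k
        = ff (ZMod p) 1 := by
      rw [Finset.sum_congr rfl (fun k _ => by rw [apply_ite C, map_one, map_zero, ite_mul,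
        one_mul, zero_mul] : ∀ k ∈ range (p+1), C (if k = 1 then (1:ZMod p) else 0) * ff (ZMod p) k
          = if k = 1 then ff (ZMod p) k else 0)]
      rw [Finset.sum_ite_eq' (range (p+1)) 1 (ff (ZMod p)),
        if_pos (Finset.mem_range.mpr (Nat.succ_lt_succ hp.pos))]
    have h3 : ∑ k ∈ range (p+1), C (if k = p then (1:ZMod p) else 0) * ff (ZMod p) k
        = ff (ZMod p) p := by
      rw [Finset.sum_congr rfl (fun k _ => by rw [apply_ite C, map_one, map_zero, ite_mul,
        one_mul, zero_mul] : ∀ k ∈ range (p+1), C (if k = p then (1:ZMod p) else 0) * ff (ZMod p) k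
          = if k = p then ff (ZMod p) k else 0)]
      rw [Finset.sum_ite_eq' (range (p+1)) p (ff (ZMod p)),
        if_pos (Finset.mem_range.mpr (Nat.lt_succ_self p))]
    rw [h1, h2, h3, ff_one, ff_p]
    ring
  rcases le_or_gt k p with hk | hk
  · have := ff_sum_zero (ZMod p) c p hsum k hk
    simp only [hc] at this
    rw [sub_sub] at this
    have h := sub_eq_zero.mp this
    rw [h]
  · rw [S2_eq_zero hk]
    have hp2 := hp.one_lt
    have h1 : k ≠ 1 := by omega
    have h2 : k ≠ p := by omega
    simp [h1, h2]

lemma S2_add_p (p : ℕ) [Fact p.Prime] (n k : ℕ) :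
    (S2 (n+p) k : ZMod p) = (S2 (n+1) k : ZMod p)
      + (if p ≤ k then (S2 n (k-p) : ZMod p) else 0) := by
  have hp : p.Prime := Fact.out
  have hp2 := hp.one_lt
  induction n generalizing k with
  | zero =>
    rw [zero_add, zero_add, S2_p_cast]
    match k with
    | 0 => simp [hp.pos.ne, Nat.not_le_of_lt hp.pos]
    | 1 =>
      have h1 : ¬ p ≤ 1 := by omega
      simp [h1, S2_succ_succ, hp2.ne]
    | (m+2) =>
      have h1 : m + 2 ≠ 1 := by omega
      have hS1 : S2 1 (m+2) = 0 := S2_eq_zero (by omega)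
      rw [if_neg h1, hS1, Nat.cast_zero, zero_add, zero_add]
      by_cases h : m + 2 = p
      · rw [if_pos h, if_pos h.ge, show m + 2 - p = 0 by omega, S2_zero_zero, Nat.cast_one]
      · rw [if_neg h]
        rcases le_or_gt p (m+2) with hle | hlt
        · rw [if_pos hle, show m + 2 - p = (m + 1 - p) + 1 by omega, S2_zero_succ, Nat.cast_zero]
        · rw [if_neg (not_le.mpr hlt)]
  | succ n ih =>
    match k with
    | 0 =>
      rw [show n + 1 + p = (n + p) + 1 by omega, S2_succ_zero, S2_succ_zero]
      simp [Nat.not_le_of_lt hp.pos]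
    | (k+1) =>
      have hL : (S2 (n+1+p) (k+1) : ZMod p)
          = ((k:ZMod p)+1) * (S2 (n+p) (k+1) : ZMod p) + (S2 (n+p) k : ZMod p) := by
        rw [show n + 1 + p = (n + p) + 1 by omega, S2_succ_succ]; push_cast; ring
      have hR : (S2 (n+1+1) (k+1) : ZMod p)
          = ((k:ZMod p)+1) * (S2 (n+1) (k+1) : ZMod p) + (S2 (n+1) k : ZMod p) := by
        rw [S2_succ_succ]; push_cast; ring
      rw [hL, ih (k+1), ih k, hR]
      rcases le_or_gt p k with hle | hlt
      · have hle1 : p ≤ k + 1 := by omega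
        have e2 : k + 1 - p = (k - p) + 1 := by omega
        have e3 : ((k - p : ℕ) : ZMod p) = (k : ZMod p) := by
          rw [Nat.cast_sub hle, ZMod.natCast_self, sub_zero]
        have hS : (S2 (n+1) ((k-p)+1) : ZMod p)
            = ((k:ZMod p)+1) * (S2 n ((k-p)+1) : ZMod p) + (S2 n (k-p) : ZMod p) := by
          rw [S2_succ_succ]; push_cast; rw [e3]
        simp only [if_pos hle, if_pos hle1, e2, hS]
        ring
      · rcases Nat.lt_or_ge (k+1) p with hlt2 | hge
        · simp only [if_neg (not_le.mpr hlt), if_neg (not_le.mpr hlt2)]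
          ring
        · have heq : p = k + 1 := by omega
          have hz : ((k:ZMod p) + 1) = 0 := by
            have h0 : ((k+1 : ℕ) : ZMod p) = 0 := by rw [← heq]; exact ZMod.natCast_self p
            push_cast at h0; exact h0
          simp only [if_neg (not_le.mpr hlt), if_pos heq.le, show k + 1 - p = 0 by omega,
            S2_succ_zero, Nat.cast_zero, hz]
          ring

lemma touchard (p : ℕ) [Fact p.Prime] (n : ℕ) :
    (bell (n+p) : ZMod p) = (bell (n+1) : ZMod p) + (bell n : ZMod p) := by
  have hp : p.Prime := Fact.out
  have h1 : (bell (n+p) : ZMod p) = ∑ k ∈ range (n+p+1), (S2 (n+p) k : ZMod p) := by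
    rw [bell]; push_cast; ring
  rw [h1, Finset.sum_congr rfl fun k _ => S2_add_p p n k, Finset.sum_add_distrib]
  congr 1
  · have h2 : ∑ j ∈ range ((n+p)+1), S2 (n+1) j = bell (n+1) :=
      S2_sum_bell (by have := hp.pos; omega : n + 1 ≤ n + p)
    calc ∑ k ∈ range (n+p+1), (S2 (n+1) k : ZMod p)
        = ((∑ j ∈ range ((n+p)+1), S2 (n+1) j : ℕ) : ZMod p) := by push_cast; ring
      _ = (bell (n+1) : ZMod p) := by rw [h2]
  · have e0 : range (n+p+1) = Finset.Ico 0 (n+p+1) := by rw [Finset.range_eq_Ico]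
    rw [e0, ← Finset.sum_Ico_consecutive _ (Nat.zero_le p) (by omega : p ≤ n+p+1)]
    have hz : ∑ k ∈ Finset.Ico 0 p, (if p ≤ k then (S2 n (k-p) : ZMod p) else 0) = 0 :=
      Finset.sum_eq_zero fun k hk => by
        rw [if_neg (not_le.mpr (Finset.mem_Ico.mp hk).2)]
    rw [hz, zero_add, Finset.sum_Ico_eq_sum_range]
    have e1 : n + p + 1 - p = n + 1 := by omega
    rw [e1]
    have e2 : ∀ i ∈ range (n+1), (if p ≤ p + i then (S2 n (p + i - p) : ZMod p) else 0)
        = (S2 n i : ZMod p) := by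
      intro i _
      rw [if_pos (Nat.le_add_right p i), Nat.add_sub_cancel_left]
    rw [Finset.sum_congr rfl e2, bell]
    push_cast
    ring

section Main
variable (p : ℕ) [hpf : Fact p.Prime]

instance : Fact (1 < p) := ⟨hpf.out.one_lt⟩

noncomputable def fpoly : (ZMod p)[X] := X^p - X - 1

lemma fpoly_eq : fpoly p = X^p - (X + C 1) := by rw [fpoly, sub_sub, map_one]

lemma fpoly_monic : (fpoly p).Monic := by
  rw [fpoly_eq]
  apply monic_X_pow_sub
  calc (X + C 1 : (ZMod p)[X]).degree = 1 := by
        rw [Polynomial.degree_X_add_C (1 : ZMod p)]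
    _ < (p : WithBot ℕ) := by exact_mod_cast hpf.out.one_lt

lemma fpoly_degree : (fpoly p).degree = p := by
  rw [fpoly_eq]
  rw [degree_sub_eq_left_of_degree_lt]
  · exact degree_X_pow p
  · rw [degree_X_pow, Polynomial.degree_X_add_C (1 : ZMod p)]
    exact_mod_cast hpf.out.one_lt

noncomputable abbrev Aring := AdjoinRoot (fpoly p)
noncomputable def uu : Aring p := AdjoinRoot.root (fpoly p)

instance : Nontrivial (Aring p) := by
  apply nontrivial_of_ne (1 : Aring p) 0
  intro h
  have h1 : (AdjoinRoot.mk (fpoly p)) 1 = (AdjoinRoot.mk (fpoly p)) 0 := by simpa using h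
  have h2 : fpoly p ∣ 1 - 0 := AdjoinRoot.mk_eq_mk.mp h1
  rw [sub_zero] at h2
  have h3 := Polynomial.degree_eq_zero_of_isUnit (isUnit_of_dvd_one h2)
  rw [fpoly_degree] at h3
  have := hpf.out.pos
  simp only [Nat.cast_eq_zero] at h3
  omega

instance : CharP (Aring p) p :=
  charP_of_injective_algebraMap (algebraMap (ZMod p) (Aring p)).injective p

lemma uu_pow_p : (uu p)^p = uu p + 1 := by
  have h : AdjoinRoot.mk (fpoly p) (fpoly p) = 0 := AdjoinRoot.mk_self
  have h2 : (AdjoinRoot.mk (fpoly p)) (X^p - X - 1) = (uu p)^p - uu p - 1 := by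
    rw [map_sub, map_sub, map_pow, AdjoinRoot.mk_X, map_one, uu]
  have h3 : (uu p)^p - uu p - 1 = 0 := by rw [← h2]; exact h
  linear_combination h3

lemma natCast_pow_p (m : ℕ) : ((m : Aring p))^p = (m : Aring p) := by
  have : ((m : Aring p)) = algebraMap (ZMod p) (Aring p) (m : ZMod p) := by
    rw [map_natCast]
  rw [this, ← map_pow, ZMod.pow_card]

-- the linear functional on polynomials
noncomputable def Phi : (ZMod p)[X] →+ ZMod p where
  toFun P := P.sum fun k c => c * (bell k : ZMod p)
  map_zero' := Polynomial.sum_zero_index _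
  map_add' P Q := Polynomial.sum_add_index P Q (fun k c => c * (bell k : ZMod p))
    (fun i => zero_mul _) (fun a b₁ b₂ => add_mul _ _ _)

lemma Phi_monomial (j : ℕ) (c : ZMod p) : Phi p (monomial j c) = c * bell j :=
  Polynomial.sum_monomial_index c (fun k c => c * (bell k : ZMod p)) (zero_mul _)

lemma Phi_X_pow (j : ℕ) : Phi p (X^j) = bell j := by
  rw [X_pow_eq_monomial, Phi_monomial, one_mul]

lemma Phi_f_mul (Q : (ZMod p)[X]) : Phi p (fpoly p * Q) = 0 := by
  induction Q using Polynomial.induction_on' with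
  | add P Q hP hQ => rw [mul_add, map_add, hP, hQ, add_zero]
  | monomial j c =>
    have e : fpoly p * monomial j c
        = monomial (j+p) c - monomial (j+1) c - monomial j c := by
      rw [← C_mul_X_pow_eq_monomial, ← C_mul_X_pow_eq_monomial, ← C_mul_X_pow_eq_monomial,
        fpoly]
      ring
    rw [e, map_sub, map_sub, Phi_monomial, Phi_monomial, Phi_monomial]
    have ht := touchard p j
    linear_combination c * ht

noncomputable def phiA : Aring p → ZMod p :=
  fun a => Phi p (AdjoinRoot.modByMonicHom (fpoly_monic p) a)

lemma phiA_mk (P : (ZMod p)[X]) : phiA p (AdjoinRoot.mk (fpoly p) P) = Phi p P := by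
  rw [phiA, AdjoinRoot.modByMonicHom_mk]
  conv_rhs => rw [← Polynomial.modByMonic_add_div P (fpoly p)]
  rw [map_add, Phi_f_mul, add_zero]

lemma phiA_u_pow (m : ℕ) : phiA p ((uu p)^m) = bell m := by
  have h : AdjoinRoot.mk (fpoly p) (X^m) = (uu p)^m := by
    rw [map_pow, AdjoinRoot.mk_X, uu]
  rw [← h, phiA_mk, Phi_X_pow]

lemma Phi_add_one_pow (k : ℕ) : Phi p ((X + 1)^k) = bell (k+1) := by
  rw [add_pow]
  rw [Finset.sum_congr rfl (fun j _ => by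
    rw [one_pow, mul_one, ← C_eq_natCast, mul_comm, C_mul_X_pow_eq_monomial] :
    ∀ j ∈ range (k+1), (X:(ZMod p)[X])^j * 1^(k-j) * (k.choose j : (ZMod p)[X])
      = monomial j ((k.choose j : ZMod p)))]
  rw [map_sum]
  rw [Finset.sum_congr rfl fun j _ => Phi_monomial p j _]
  rw [bell_succ]
  push_cast
  ring

lemma bell_mul_p (j : ℕ) : (bell (j*p) : ZMod p) = (bell (j+1) : ZMod p) := by
  have hdvd : fpoly p ∣ (X:(ZMod p)[X])^(j*p) - (X+1)^j := by
    have : (X:(ZMod p)[X])^(j*p) = ((X:(ZMod p)[X])^p)^j := by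
      rw [← pow_mul, mul_comm]
    rw [this]
    have h2 : fpoly p = (X:(ZMod p)[X])^p - (X+1) := by rw [fpoly]; ring
    rw [h2]
    exact sub_dvd_pow_sub_pow _ _ j
  obtain ⟨Q, hQ⟩ := hdvd
  have : (X:(ZMod p)[X])^(j*p) = (X+1)^j + fpoly p * Q := by
    rw [← hQ]; ring
  calc (bell (j*p) : ZMod p) = Phi p (X^(j*p)) := (Phi_X_pow p _).symm
    _ = Phi p ((X+1)^j) + Phi p (fpoly p * Q) := by rw [this, map_add]
    _ = bell (j+1) := by rw [Phi_f_mul, add_zero, Phi_add_one_pow]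

lemma Phi_pow_p (P : (ZMod p)[X]) : Phi p (P^p) = Phi p (X * P) := by
  induction P using Polynomial.induction_on' with
  | add P Q hP hQ =>
    have : (P + Q)^p = P^p + Q^p := add_pow_char _ _ _
    rw [this, mul_add, map_add, map_add, hP, hQ]
  | monomial n c =>
    rw [monomial_pow, ZMod.pow_card]
    have : (X : (ZMod p)[X]) * monomial n c = monomial (n+1) c := by
      rw [← C_mul_X_pow_eq_monomial, ← C_mul_X_pow_eq_monomial]; ring
    rw [this, Phi_monomial, Phi_monomial, bell_mul_p]

lemma phiA_pow_p (z : Aring p) : phiA p (z^p) = phiA p (uu p * z) := by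
  obtain ⟨P, rfl⟩ := AdjoinRoot.mk_surjective z
  have h1 : (AdjoinRoot.mk (fpoly p) P)^p = AdjoinRoot.mk (fpoly p) (P^p) := by
    rw [map_pow]
  have h2 : uu p * AdjoinRoot.mk (fpoly p) P = AdjoinRoot.mk (fpoly p) (X * P) := by
    rw [map_mul, AdjoinRoot.mk_X, uu]
  rw [h1, h2, phiA_mk, phiA_mk]
  exact Phi_pow_p p P

lemma sub_nat_pow_p (c : ℕ) : (uu p - (c+1 : ℕ))^p = uu p - (c : ℕ) := by
  haveI : CharP (Aring p) p := inferInstance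
  rw [sub_pow_char, uu_pow_p, natCast_pow_p]
  push_cast
  ring

lemma sub_nat_pow_pow (c : ℕ) : (uu p - (c : ℕ))^(p^c) = uu p := by
  induction c with
  | zero => simp
  | succ c ih =>
    have : p^(c+1) = p * p^c := by ring
    rw [this, pow_mul, sub_nat_pow_p, ih]

lemma main_lemma : ∀ r m : ℕ,
    phiA p ((uu p - (r : Aring p))^(m + ∑ k ∈ Finset.Icc 1 r, p ^ k)) = bell m := by
  intro r
  induction r with
  | zero =>
    intro m
    rw [show (Finset.Icc 1 0 : Finset ℕ) = ∅ from Finset.Icc_eq_empty (by omega)]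
    simp only [Finset.sum_empty, add_zero, Nat.cast_zero, sub_zero]
    exact phiA_u_pow p m
  | succ r ih =>
    intro m
    rw [Finset.sum_Icc_succ_top (by omega : 1 ≤ r + 1)]
    set w : Aring p := uu p - ((r+1 : ℕ) : Aring p) with hw
    have e1 : m + (∑ k ∈ Finset.Icc 1 r, p ^ k + p^(r+1))
        = p^(r+1) + (m + ∑ k ∈ Finset.Icc 1 r, p ^ k) := by ring
    rw [e1, pow_add, sub_nat_pow_pow p (r+1)]
    rw [← phiA_pow_p]
    have e2 : (w ^ (m + ∑ k ∈ Finset.Icc 1 r, p ^ k))^p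
        = (uu p - (r : Aring p))^(m + ∑ k ∈ Finset.Icc 1 r, p ^ k) := by
      rw [← pow_mul, mul_comm, pow_mul, hw, sub_nat_pow_p]
    rw [e2, ih]
end Main


theorem backward_touchard_iterated (p : ℕ) (hp : p.Prime) (r n : ℕ)
    (hn : ∑ k ∈ Finset.Icc 1 r, p ^ k ≤ n) :
    (bell (n - ∑ k ∈ Finset.Icc 1 r, p ^ k) : ℤ) ≡ rBell n (-(r : ℤ)) [ZMOD p] := by
  haveI : Fact p.Prime := ⟨hp⟩
  apply (ZMod.intCast_eq_intCast_iff _ _ _).mp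
  have key : phiA p ((uu p - (r : Aring p))^n)
      = ∑ j ∈ Finset.range (n+1),
        (n.choose j : ZMod p) * (-(r : ZMod p))^(n-j) * (bell j : ZMod p) := by
    have hmk : AdjoinRoot.mk (fpoly p) ((X - C ((r : ZMod p)))^n)
        = (uu p - (r : Aring p))^n := by
      rw [map_pow, map_sub, AdjoinRoot.mk_X, AdjoinRoot.mk_C]
      rw [map_natCast]
      rfl
    rw [← hmk, phiA_mk]
    have e1 : (X - C ((r : ZMod p)))^n = (X + C (-(r : ZMod p)))^n := by
      rw [map_neg, sub_eq_add_neg]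
    rw [e1, add_pow, map_sum]
    refine Finset.sum_congr rfl fun j _ => ?_
    have e2 : (X:(ZMod p)[X])^j * (C (-(r : ZMod p)))^(n-j) * (n.choose j : (ZMod p)[X])
        = monomial j ((-(r : ZMod p))^(n-j) * (n.choose j : ZMod p)) := by
      rw [← C_pow, ← C_eq_natCast, ← C_mul_X_pow_eq_monomial, map_mul]
      ring
    rw [e2, Phi_monomial]
    ring
  have hL : (bell (n - ∑ k ∈ Finset.Icc 1 r, p ^ k) : ZMod p)
      = phiA p ((uu p - (r : Aring p))^n) := by
    conv_rhs => rw [show n = (n - ∑ k ∈ Finset.Icc 1 r, p ^ k) + ∑ k ∈ Finset.Icc 1 r, p ^ k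
      from (Nat.sub_add_cancel hn).symm]
    rw [main_lemma p r (n - ∑ k ∈ Finset.Icc 1 r, p ^ k)]
  push_cast
  rw [hL, key, rBell]
  push_cast
  ring
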